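/- Let G be a toroidal grid diagram of size n representing a knot. Then the Alexander and Maslov gradings of the canonical generator x^UR satisfy A(x^UR) = (1/2)·M(x^UR). -/
import Mathlib


open Finset

noncomputable section

open scoped Classical

/-- A formal rational-coefficient combination of points in the plane. -/
abbrev PtComb := (ℝ × ℝ) →₀ ℚ

/-- `I(A,B)`: the number of pairs `(a, b) ∈ A × B` with `a₁ < b₁` and `a₂ < b₂`,
extended bilinearly to formal combinations of finite point sets. -/
def Ifun (f g : PtComb) : ℚ :=
  ∑ p ∈ f.support, ∑ q ∈ g.support,
    if p.1 < q.1 ∧ p.2 < q.2 then f p * g q else 0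

/-- `J(A,B) = (I(A,B) + I(B,A))/2`. -/
def Jfun (f g : PtComb) : ℚ := (Ifun f g + Ifun g f) / 2

/-- A toroidal grid diagram of size `n`: a pair of permutations `σX`, `σO` of
`{0, …, n-1}` with `σX i ≠ σO i` for all `i`. -/
structure Grid (n : ℕ) where
  σX : Equiv.Perm (Fin n)
  σO : Equiv.Perm (Fin n)
  disj : ∀ i, σX i ≠ σO i

namespace Grid

variable {n : ℕ}

/-- `G` represents a knot: the permutation `σO⁻¹ ∘ σX` has a single orbit,
i.e. it is an `n`-cycle. -/
def RepKnot (G : Grid n) : Prop :=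
  ∀ i j : Fin n, ∃ k : ℕ, ((G.σO⁻¹ * G.σX) ^ k) i = j

/-- The `X`-marking of column `i`, at the planar point `(i + 1/2, σX i + 1/2)`. -/
def Xpt (G : Grid n) (i : Fin n) : ℝ × ℝ :=
  (((i : ℕ) : ℝ) + 1/2, ((G.σX i : ℕ) : ℝ) + 1/2)

/-- The `O`-marking of column `i`, at the planar point `(i + 1/2, σO i + 1/2)`. -/
def Opt (G : Grid n) (i : Fin n) : ℝ × ℝ :=
  (((i : ℕ) : ℝ) + 1/2, ((G.σO i : ℕ) : ℝ) + 1/2)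

/-- The set `𝕏` of `X`-markings, as a formal point combination. -/
def XX (G : Grid n) : PtComb := ∑ i : Fin n, Finsupp.single (G.Xpt i) 1

/-- The set `𝕆` of `O`-markings, as a formal point combination. -/
def OO (G : Grid n) : PtComb := ∑ i : Fin n, Finsupp.single (G.Opt i) 1

/-- The point set `{(i, x i)}` of a generator `x`, as a formal point combination. -/
def pts (x : Equiv.Perm (Fin n)) : PtComb :=
  ∑ i : Fin n, Finsupp.single (((i : ℕ) : ℝ), ((x i : ℕ) : ℝ)) 1

/-- The Maslov grading `M(x) = J(x − 𝕆, x − 𝕆) + 1`. -/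
def M (G : Grid n) (x : Equiv.Perm (Fin n)) : ℚ :=
  Jfun (pts x - G.OO) (pts x - G.OO) + 1

/-- The `X`-Maslov grading `M_𝕏(x) = J(x − 𝕏, x − 𝕏) + 1`. -/
def MX (G : Grid n) (x : Equiv.Perm (Fin n)) : ℚ :=
  Jfun (pts x - G.XX) (pts x - G.XX) + 1

/-- The Alexander grading `A(x) = J(x − (𝕏+𝕆)/2, 𝕏 − 𝕆) − (n−1)/2`. -/
def A (G : Grid n) (x : Equiv.Perm (Fin n)) : ℚ :=
  Jfun (pts x - (2 : ℚ)⁻¹ • (G.XX + G.OO)) (G.XX - G.OO) - ((n : ℚ) - 1) / 2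

/-- The canonical generator `x^LL`, whose points are the lower-left corners of the
`X`-marked squares. -/
def xLL (G : Grid n) : Equiv.Perm (Fin n) := G.σX

/-- The canonical generator `x^UR`, `x^UR(i) = σX((i−1) mod n) + 1 (mod n)`, whose points
are the upper-right corners of the `X`-marked squares (reduced mod `n`). -/
def xUR [NeZero n] (G : Grid n) : Equiv.Perm (Fin n) where
  toFun i := G.σX (i - 1) + 1
  invFun i := G.σX.symm (i - 1) + 1
  left_inv i := by simp
  right_inv i := by simp

end Grid

lemma Ifun_eq_sum (f g : PtComb) {s t : Finset (ℝ × ℝ)}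
    (hs : f.support ⊆ s) (ht : g.support ⊆ t) :
    Ifun f g = ∑ p ∈ s, ∑ q ∈ t,
      if p.1 < q.1 ∧ p.2 < q.2 then f p * g q else 0 := by
  unfold Ifun
  rw [Finset.sum_subset hs]
  · refine Finset.sum_congr rfl fun p _ => ?_
    rw [Finset.sum_subset ht]
    intro q _ hq
    simp [Finsupp.notMem_support_iff.1 hq]
  · intro p _ hp
    simp [Finsupp.notMem_support_iff.1 hp]

lemma Ifun_zero_left (g : PtComb) : Ifun 0 g = 0 := by simp [Ifun]
lemma Ifun_zero_right (f : PtComb) : Ifun f 0 = 0 := by simp [Ifun]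

lemma Ifun_add_left (f g h : PtComb) : Ifun (f + g) h = Ifun f h + Ifun g h := by
  rw [Ifun_eq_sum (f+g) h (s := f.support ∪ g.support) (t := h.support)
      (Finsupp.support_add) (subset_rfl),
    Ifun_eq_sum f h (s := f.support ∪ g.support) (t := h.support)
      (Finset.subset_union_left) (subset_rfl),
    Ifun_eq_sum g h (s := f.support ∪ g.support) (t := h.support)
      (Finset.subset_union_right) (subset_rfl), ← Finset.sum_add_distrib]
  refine Finset.sum_congr rfl fun p _ => ?_
  rw [← Finset.sum_add_distrib]
  refine Finset.sum_congr rfl fun q _ => ?_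
  simp only [Finsupp.add_apply]
  split_ifs <;> ring

lemma Ifun_add_right (f g h : PtComb) : Ifun f (g + h) = Ifun f g + Ifun f h := by
  rw [Ifun_eq_sum f (g+h) (s := f.support) (t := g.support ∪ h.support)
      (subset_rfl) (Finsupp.support_add),
    Ifun_eq_sum f g (s := f.support) (t := g.support ∪ h.support)
      (subset_rfl) (Finset.subset_union_left),
    Ifun_eq_sum f h (s := f.support) (t := g.support ∪ h.support)
      (subset_rfl) (Finset.subset_union_right), ← Finset.sum_add_distrib]
  refine Finset.sum_congr rfl fun p _ => ?_
  rw [← Finset.sum_add_distrib]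
  refine Finset.sum_congr rfl fun q _ => ?_
  simp only [Finsupp.add_apply]
  split_ifs <;> ring

lemma Ifun_smul_left (c : ℚ) (f g : PtComb) : Ifun (c • f) g = c * Ifun f g := by
  rw [Ifun_eq_sum (c • f) g (s := f.support) (t := g.support)
      (Finsupp.support_smul) (subset_rfl), Ifun, Finset.mul_sum]
  refine Finset.sum_congr rfl fun p _ => ?_
  rw [Finset.mul_sum]
  refine Finset.sum_congr rfl fun q _ => ?_
  simp only [Finsupp.smul_apply, smul_eq_mul]
  split_ifs <;> ring

lemma Ifun_smul_right (c : ℚ) (f g : PtComb) : Ifun f (c • g) = c * Ifun f g := by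
  rw [Ifun_eq_sum f (c • g) (s := f.support) (t := g.support)
      (subset_rfl) (Finsupp.support_smul), Ifun, Finset.mul_sum]
  refine Finset.sum_congr rfl fun p _ => ?_
  rw [Finset.mul_sum]
  refine Finset.sum_congr rfl fun q _ => ?_
  simp only [Finsupp.smul_apply, smul_eq_mul]
  split_ifs <;> ring

lemma Ifun_neg_left (f g : PtComb) : Ifun (-f) g = - Ifun f g := by
  have := Ifun_smul_left (-1) f g
  simpa using this

lemma Ifun_neg_right (f g : PtComb) : Ifun f (-g) = - Ifun f g := by
  have h := Ifun_add_right f g (-g)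
  simp only [add_neg_cancel, Ifun_zero_right] at h
  linarith

lemma Ifun_sub_left (f g h : PtComb) : Ifun (f - g) h = Ifun f h - Ifun g h := by
  rw [sub_eq_add_neg, Ifun_add_left, Ifun_neg_left]; ring

lemma Ifun_sub_right (f g h : PtComb) : Ifun f (g - h) = Ifun f g - Ifun f h := by
  rw [sub_eq_add_neg, Ifun_add_right, Ifun_neg_right]; ring

lemma Ifun_sum_left {ι : Type*} (s : Finset ι) (f : ι → PtComb) (h : PtComb) :
    Ifun (∑ i ∈ s, f i) h = ∑ i ∈ s, Ifun (f i) h :=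
  map_sum (AddMonoidHom.mk' (fun f => Ifun f h) (fun a b => Ifun_add_left a b h)) f s

lemma Ifun_sum_right {ι : Type*} (f : PtComb) (s : Finset ι) (g : ι → PtComb) :
    Ifun f (∑ i ∈ s, g i) = ∑ i ∈ s, Ifun f (g i) :=
  map_sum (AddMonoidHom.mk' (fun g => Ifun f g) (fun a b => Ifun_add_right f a b)) g s

lemma Ifun_single_single (p q : ℝ × ℝ) :
    Ifun (Finsupp.single p 1) (Finsupp.single q 1)
      = if p.1 < q.1 ∧ p.2 < q.2 then (1 : ℚ) else 0 := by
  rw [Ifun, Finsupp.support_single_ne_zero p one_ne_zero,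
    Finsupp.support_single_ne_zero q one_ne_zero]
  simp

lemma Ifun_family {ι κ : Type*} [Fintype ι] [Fintype κ] (p : ι → ℝ × ℝ) (q : κ → ℝ × ℝ) :
    Ifun (∑ i : ι, Finsupp.single (p i) 1) (∑ j : κ, Finsupp.single (q j) 1)
      = ∑ i : ι, ∑ j : κ, if (p i).1 < (q j).1 ∧ (p i).2 < (q j).2 then (1 : ℚ) else 0 := by
  rw [Ifun_sum_left]
  exact Finset.sum_congr rfl fun i _ => by
    rw [Ifun_sum_right]
    exact Finset.sum_congr rfl fun j _ => Ifun_single_single _ _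

lemma cast_lt_half_iff (a b : ℕ) : (a : ℝ) < (b : ℝ) + 1/2 ↔ a ≤ b := by
  constructor
  · intro h
    by_contra h'
    push_neg at h'
    have : (b : ℝ) + 1 ≤ a := by exact_mod_cast h'
    linarith
  · intro h
    have : (a : ℝ) ≤ b := by exact_mod_cast h
    linarith

lemma half_lt_cast_iff (a b : ℕ) : (a : ℝ) + 1/2 < (b : ℝ) ↔ a < b := by
  constructor
  · intro h
    by_contra h'
    push_neg at h'
    have : (b : ℝ) ≤ a := by exact_mod_cast h'
    linarith
  · intro h
    have : (a : ℝ) + 1 ≤ b := by exact_mod_cast h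
    linarith

lemma half_lt_half_iff (a b : ℕ) : (a : ℝ) + 1/2 < (b : ℝ) + 1/2 ↔ a < b := by
  constructor
  · intro h
    by_contra h'
    push_neg at h'
    have : (b : ℝ) ≤ a := by exact_mod_cast h'
    linarith
  · intro h
    have : (a : ℝ) + 1 ≤ b := by exact_mod_cast h
    linarith

set_option maxHeartbeats 1600000 in
lemma key0 (n iv jv av bv iS jS aS bS : ℕ) (hn : 2 ≤ n) (hi : iv < n) (hj : jv < n)
    (ha : av < n) (hb : bv < n)
    (hinj : av = bv ↔ iv = jv)
    (hiS' : iv + 1 = n ∧ iS = 0 ∨ iv + 1 ≠ n ∧ iS = iv + 1)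
    (hjS' : jv + 1 = n ∧ jS = 0 ∨ jv + 1 ≠ n ∧ jS = jv + 1)
    (haS' : av + 1 = n ∧ aS = 0 ∨ av + 1 ≠ n ∧ aS = av + 1)
    (hbS' : bv + 1 = n ∧ bS = 0 ∨ bv + 1 ≠ n ∧ bS = bv + 1) :
    ((if iS ≤ jv ∧ aS ≤ bv then (1:ℕ) else 0)
      + (if iv < jS ∧ av < bS then (1:ℕ) else 0))
      = ((if iS < jS ∧ aS < bS then (1:ℕ) else 0)
        + (if iv < jv ∧ av < bv then (1:ℕ) else 0))
      + (((if iv = jv ∧ (jv ≠ n - 1 ∧ bv ≠ n - 1) then (1:ℕ) else 0)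
      + (if (av = n - 1 ∧ iv ≠ n - 1) ∧ jv = n - 1 then (1:ℕ) else 0))
      + ((if iv = n - 1 ∧ (bv = n - 1 ∧ jv ≠ n - 1) then (1:ℕ) else 0)
      + (if (iv = n - 1 ∧ av = n - 1) ∧ jv = n - 1 then (1:ℕ) else 0))) := by
  have e1 : (iS ≤ jv) ↔ (iv < jv ∨ iv = n - 1) := by omega
  have e2 : (aS ≤ bv) ↔ (av < bv ∨ av = n - 1) := by omega
  have e3 : (iv < jS) ↔ (iv ≤ jv ∧ jv ≠ n - 1) := by omega
  have e4 : (av < bS) ↔ (av ≤ bv ∧ bv ≠ n - 1) := by omega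
  have e5 : (iS < jS) ↔ ((iv < jv ∨ iv = n - 1) ∧ jv ≠ n - 1) := by omega
  have e6 : (aS < bS) ↔ ((av < bv ∨ av = n - 1) ∧ bv ≠ n - 1) := by omega
  simp only [e1, e2, e3, e4, e5, e6]
  clear e1 e2 e3 e4 e5 e6 hiS' hjS' haS' hbS'
  rcases Decidable.em (iv = jv) with h1 | h1
  · have hab : av = bv := hinj.mpr h1
    clear hinj
    split_ifs <;> omega
  · have hab : av ≠ bv := fun h => h1 (hinj.mp h)
    clear hinj
    split_ifs <;> omega

lemma key0Q (n iv jv av bv : ℕ) (hn : 2 ≤ n) (hi : iv < n) (hj : jv < n)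
    (ha : av < n) (hb : bv < n)
    (hinj : av = bv ↔ iv = jv) :
    ((if (if iv + 1 = n then 0 else iv + 1) ≤ jv ∧ (if av + 1 = n then 0 else av + 1) ≤ bv then (1:ℚ) else 0)
      + (if iv < (if jv + 1 = n then 0 else jv + 1) ∧ av < (if bv + 1 = n then 0 else bv + 1) then (1:ℚ) else 0))
      = ((if (if iv + 1 = n then 0 else iv + 1) < (if jv + 1 = n then 0 else jv + 1)
            ∧ (if av + 1 = n then 0 else av + 1) < (if bv + 1 = n then 0 else bv + 1) then (1:ℚ) else 0)
        + (if iv < jv ∧ av < bv then (1:ℚ) else 0))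
      + (((if iv = jv ∧ (jv ≠ n - 1 ∧ bv ≠ n - 1) then (1:ℚ) else 0)
      + (if (av = n - 1 ∧ iv ≠ n - 1) ∧ jv = n - 1 then (1:ℚ) else 0))
      + ((if iv = n - 1 ∧ (bv = n - 1 ∧ jv ≠ n - 1) then (1:ℚ) else 0)
      + (if (iv = n - 1 ∧ av = n - 1) ∧ jv = n - 1 then (1:ℚ) else 0))) := by
  have h := key0 n iv jv av bv
    (if iv + 1 = n then 0 else iv + 1) (if jv + 1 = n then 0 else jv + 1)
    (if av + 1 = n then 0 else av + 1) (if bv + 1 = n then 0 else bv + 1)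
    hn hi hj ha hb hinj
    (by split_ifs with h; exacts [Or.inl ⟨h, rfl⟩, Or.inr ⟨h, rfl⟩])
    (by split_ifs with h; exacts [Or.inl ⟨h, rfl⟩, Or.inr ⟨h, rfl⟩])
    (by split_ifs with h; exacts [Or.inl ⟨h, rfl⟩, Or.inr ⟨h, rfl⟩])
    (by split_ifs with h; exacts [Or.inl ⟨h, rfl⟩, Or.inr ⟨h, rfl⟩])
  exact_mod_cast h

lemma sum_shift {n : ℕ} [NeZero n] (f : Fin n → ℚ) : ∑ i, f i = ∑ i, f (i + 1) := by
  rw [← Equiv.sum_comp (Equiv.addRight (1 : Fin n)) f]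
  rfl

lemma xUR_succ {n : ℕ} [NeZero n] (G : Grid n) (i : Fin n) :
    G.xUR (i + 1) = G.σX i + 1 := by
  show G.σX (i + 1 - 1) + 1 = G.σX i + 1
  rw [add_sub_cancel_right]

lemma fin_succ_val {n : ℕ} [NeZero n] (hn : 2 ≤ n) (k : Fin n) :
    ((k + 1 : Fin n) : ℕ) = if (k : ℕ) + 1 = n then 0 else (k : ℕ) + 1 := by
  have h1 : ((1 : Fin n) : ℕ) = 1 := by
    rw [Fin.val_one']
    exact Nat.mod_eq_of_lt hn
  rw [Fin.add_def, h1]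
  have hk := k.isLt
  split_ifs with h
  · simp [h]
  · exact Nat.mod_eq_of_lt (by omega)

lemma expand_main {n : ℕ} [NeZero n] (G : Grid n) :
    Ifun (Grid.pts G.xUR - G.XX) (Grid.pts G.xUR - G.XX)
    = ((∑ i : Fin n, ∑ j : Fin n,
          if (i : ℕ) < (j : ℕ) ∧ (G.xUR i : ℕ) < (G.xUR j : ℕ) then (1:ℚ) else 0)
      + (∑ i : Fin n, ∑ j : Fin n,
          if (i : ℕ) < (j : ℕ) ∧ (G.σX i : ℕ) < (G.σX j : ℕ) then (1:ℚ) else 0))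
      - ((∑ i : Fin n, ∑ j : Fin n,
          if (i : ℕ) ≤ (j : ℕ) ∧ (G.xUR i : ℕ) ≤ (G.σX j : ℕ) then (1:ℚ) else 0)
        + (∑ i : Fin n, ∑ j : Fin n,
          if (i : ℕ) < (j : ℕ) ∧ (G.σX i : ℕ) < (G.xUR j : ℕ) then (1:ℚ) else 0)) := by
  rw [Ifun_sub_left, Ifun_sub_right, Ifun_sub_right]
  unfold Grid.pts Grid.XX Grid.Xpt
  rw [Ifun_family, Ifun_family, Ifun_family, Ifun_family]
  simp only [Nat.cast_lt, cast_lt_half_iff, half_lt_cast_iff, half_lt_half_iff]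
  ring

lemma summed {n : ℕ} [NeZero n] (hn : 2 ≤ n) (G : Grid n) :
    (∑ i : Fin n, ∑ j : Fin n,
        if (i : ℕ) ≤ (j : ℕ) ∧ (G.xUR i : ℕ) ≤ (G.σX j : ℕ) then (1:ℚ) else 0)
    + (∑ i : Fin n, ∑ j : Fin n,
        if (i : ℕ) < (j : ℕ) ∧ (G.σX i : ℕ) < (G.xUR j : ℕ) then (1:ℚ) else 0)
    = ((∑ i : Fin n, ∑ j : Fin n,
        if (i : ℕ) < (j : ℕ) ∧ (G.xUR i : ℕ) < (G.xUR j : ℕ) then (1:ℚ) else 0)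
      + (∑ i : Fin n, ∑ j : Fin n,
        if (i : ℕ) < (j : ℕ) ∧ (G.σX i : ℕ) < (G.σX j : ℕ) then (1:ℚ) else 0))
    + (∑ i : Fin n, ∑ j : Fin n,
        (((if (i : ℕ) = (j : ℕ) ∧ ((j : ℕ) ≠ n - 1 ∧ (G.σX j : ℕ) ≠ n - 1) then (1:ℚ) else 0)
        + (if ((G.σX i : ℕ) = n - 1 ∧ (i : ℕ) ≠ n - 1) ∧ (j : ℕ) = n - 1 then (1:ℚ) else 0))
        + ((if (i : ℕ) = n - 1 ∧ ((G.σX j : ℕ) = n - 1 ∧ (j : ℕ) ≠ n - 1) then (1:ℚ) else 0)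
        + (if ((i : ℕ) = n - 1 ∧ (G.σX i : ℕ) = n - 1) ∧ (j : ℕ) = n - 1 then (1:ℚ) else 0)))) := by
  have hT3 : (∑ i : Fin n, ∑ j : Fin n,
        if (i : ℕ) ≤ (j : ℕ) ∧ (G.xUR i : ℕ) ≤ (G.σX j : ℕ) then (1:ℚ) else 0)
      = ∑ i : Fin n, ∑ j : Fin n,
        if (if (i:ℕ) + 1 = n then 0 else (i:ℕ) + 1) ≤ (j : ℕ)
          ∧ (if (G.σX i : ℕ) + 1 = n then 0 else (G.σX i : ℕ) + 1) ≤ (G.σX j : ℕ)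
          then (1:ℚ) else 0 := by
    rw [sum_shift (fun i => ∑ j : Fin n,
        if (i : ℕ) ≤ (j : ℕ) ∧ (G.xUR i : ℕ) ≤ (G.σX j : ℕ) then (1:ℚ) else 0)]
    refine Finset.sum_congr rfl fun i _ => Finset.sum_congr rfl fun j _ => ?_
    simp only [xUR_succ, fin_succ_val hn]
  have hT4 : (∑ i : Fin n, ∑ j : Fin n,
        if (i : ℕ) < (j : ℕ) ∧ (G.σX i : ℕ) < (G.xUR j : ℕ) then (1:ℚ) else 0)
      = ∑ i : Fin n, ∑ j : Fin n,
        if (i:ℕ) < (if (j:ℕ) + 1 = n then 0 else (j:ℕ) + 1)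
          ∧ (G.σX i : ℕ) < (if (G.σX j : ℕ) + 1 = n then 0 else (G.σX j : ℕ) + 1)
          then (1:ℚ) else 0 := by
    refine Finset.sum_congr rfl fun i _ => ?_
    rw [sum_shift (fun j =>
        if (i : ℕ) < (j : ℕ) ∧ (G.σX i : ℕ) < (G.xUR j : ℕ) then (1:ℚ) else 0)]
    refine Finset.sum_congr rfl fun j _ => ?_
    simp only [xUR_succ, fin_succ_val hn]
  have hT1 : (∑ i : Fin n, ∑ j : Fin n,
        if (i : ℕ) < (j : ℕ) ∧ (G.xUR i : ℕ) < (G.xUR j : ℕ) then (1:ℚ) else 0)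
      = ∑ i : Fin n, ∑ j : Fin n,
        if (if (i:ℕ) + 1 = n then 0 else (i:ℕ) + 1) < (if (j:ℕ) + 1 = n then 0 else (j:ℕ) + 1)
          ∧ (if (G.σX i : ℕ) + 1 = n then 0 else (G.σX i : ℕ) + 1)
            < (if (G.σX j : ℕ) + 1 = n then 0 else (G.σX j : ℕ) + 1)
          then (1:ℚ) else 0 := by
    rw [sum_shift (fun i => ∑ j : Fin n,
        if (i : ℕ) < (j : ℕ) ∧ (G.xUR i : ℕ) < (G.xUR j : ℕ) then (1:ℚ) else 0)]
    refine Finset.sum_congr rfl fun i _ => ?_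
    rw [sum_shift (fun j =>
        if ((i+1 : Fin n) : ℕ) < (j : ℕ) ∧ (G.xUR (i+1) : ℕ) < (G.xUR j : ℕ) then (1:ℚ) else 0)]
    refine Finset.sum_congr rfl fun j _ => ?_
    simp only [xUR_succ, fin_succ_val hn]
  rw [hT3, hT4, hT1]
  simp only [← Finset.sum_add_distrib]
  refine Finset.sum_congr rfl fun i _ => Finset.sum_congr rfl fun j _ => ?_
  refine key0Q n i j (G.σX i) (G.σX j) hn i.isLt j.isLt (G.σX i).isLt (G.σX j).isLt ?_
  rw [Fin.val_eq_val, Fin.val_eq_val]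
  exact EmbeddingLike.apply_eq_iff_eq _

lemma sum_eq_card {n : ℕ} [NeZero n] : ∑ _i : Fin n, (1:ℚ) = n := by
  simp

lemma sum_single_eq {n : ℕ} (c : Fin n) (x : ℚ) :
    ∑ j : Fin n, (if j = c then x else 0) = x := by
  simp

lemma Esum {n : ℕ} [NeZero n] (hn : 2 ≤ n) (a : Equiv.Perm (Fin n)) :
    (∑ i : Fin n, ∑ j : Fin n,
      (((if (i:ℕ) = (j:ℕ) ∧ ((j:ℕ) ≠ n - 1 ∧ (a j:ℕ) ≠ n - 1) then (1:ℚ) else 0)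
      + (if ((a i:ℕ) = n - 1 ∧ (i:ℕ) ≠ n - 1) ∧ (j:ℕ) = n - 1 then (1:ℚ) else 0))
      + ((if (i:ℕ) = n - 1 ∧ ((a j:ℕ) = n - 1 ∧ (j:ℕ) ≠ n - 1) then (1:ℚ) else 0)
      + (if ((i:ℕ) = n - 1 ∧ (a i:ℕ) = n - 1) ∧ (j:ℕ) = n - 1 then (1:ℚ) else 0))))
    = n := by
  have hLlt : n - 1 < n := by omega
  obtain ⟨L, hLval⟩ : ∃ L : Fin n, (L:ℕ) = n - 1 := ⟨⟨n-1, hLlt⟩, rfl⟩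
  obtain ⟨m, hmval⟩ : ∃ m : Fin n, a m = L := ⟨a.symm L, a.apply_symm_apply L⟩
  have hval : ∀ k : Fin n, ((k:ℕ) = n - 1) ↔ k = L := by
    intro k
    rw [Fin.ext_iff, hLval]
  have haval : ∀ k : Fin n, (a k = L) ↔ k = m := by
    intro k
    rw [← hmval, EmbeddingLike.apply_eq_iff_eq]
  have heq : ∀ i j : Fin n, ((i:ℕ) = (j:ℕ)) ↔ i = j := fun i j => Fin.val_eq_val i j
  simp only [ne_eq, hval, haval, heq]
  simp only [Finset.sum_add_distrib]
  have hA1 : (∑ i : Fin n, ∑ j : Fin n,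
      (if i = j ∧ (¬(j = L) ∧ ¬(j = m)) then (1:ℚ) else 0))
      = ∑ i : Fin n, (if ¬(i = L) ∧ ¬(i = m) then (1:ℚ) else 0) := by
    refine Finset.sum_congr rfl fun i _ => ?_
    simp only [ite_and]
    rw [Finset.sum_ite_eq]
    simp [ite_and]
  have hA2 : (∑ i : Fin n, ∑ j : Fin n,
      (if (i = m ∧ ¬(i = L)) ∧ j = L then (1:ℚ) else 0))
      = ∑ i : Fin n, (if i = m ∧ ¬(i = L) then (1:ℚ) else 0) := by
    refine Finset.sum_congr rfl fun i _ => ?_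
    by_cases h : i = m ∧ ¬(i = L)
    · have : ∀ j : Fin n, (if (i = m ∧ ¬(i = L)) ∧ j = L then (1:ℚ) else 0)
          = (if j = L then (1:ℚ) else 0) := by
        intro j
        by_cases hj : j = L
        · rw [if_pos ⟨h, hj⟩, if_pos hj]
        · rw [if_neg (fun hc => hj hc.2), if_neg hj]
      rw [Finset.sum_congr rfl fun j _ => this j, sum_single_eq, if_pos h]
    · rw [Finset.sum_eq_zero fun j _ => if_neg (fun hc => h hc.1), if_neg h]
  have hA3 : (∑ i : Fin n, ∑ j : Fin n,
      (if i = L ∧ (j = m ∧ ¬(j = L)) then (1:ℚ) else 0))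
      = ∑ i : Fin n, (if i = L ∧ ¬(m = L) then (1:ℚ) else 0) := by
    refine Finset.sum_congr rfl fun i _ => ?_
    by_cases h : i = L
    · by_cases h2 : m = L
      · rw [Finset.sum_eq_zero, if_neg (fun hc => hc.2 h2)]
        intro j _
        rw [if_neg]
        rintro ⟨-, rfl, hj⟩
        exact hj h2
      · have : ∀ j : Fin n, (if i = L ∧ (j = m ∧ ¬(j = L)) then (1:ℚ) else 0)
            = (if j = m then (1:ℚ) else 0) := by
          intro j
          by_cases hj : j = m
          · subst hj
            rw [if_pos ⟨h, rfl, h2⟩, if_pos rfl]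
          · rw [if_neg (fun hc => hj hc.2.1), if_neg hj]
        rw [Finset.sum_congr rfl fun j _ => this j, sum_single_eq, if_pos ⟨h, h2⟩]
    · rw [Finset.sum_eq_zero fun j _ => if_neg (fun hc => h hc.1),
        if_neg (fun hc => h hc.1)]
  have hA4 : (∑ i : Fin n, ∑ j : Fin n,
      (if (i = L ∧ i = m) ∧ j = L then (1:ℚ) else 0))
      = ∑ i : Fin n, (if i = L ∧ i = m then (1:ℚ) else 0) := by
    refine Finset.sum_congr rfl fun i _ => ?_
    by_cases h : i = L ∧ i = m
    · have : ∀ j : Fin n, (if (i = L ∧ i = m) ∧ j = L then (1:ℚ) else 0)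
          = (if j = L then (1:ℚ) else 0) := by
        intro j
        by_cases hj : j = L
        · rw [if_pos ⟨h, hj⟩, if_pos hj]
        · rw [if_neg (fun hc => hj hc.2), if_neg hj]
      rw [Finset.sum_congr rfl fun j _ => this j, sum_single_eq, if_pos h]
    · rw [Finset.sum_eq_zero fun j _ => if_neg (fun hc => h hc.1), if_neg h]
  rw [hA1, hA2, hA3, hA4]
  by_cases hm : m = L
  · have h1 : (∑ i : Fin n, (if ¬(i = L) ∧ ¬(i = m) then (1:ℚ) else 0))
        = ∑ i : Fin n, ((1:ℚ) - (if i = L then 1 else 0)) := by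
      refine Finset.sum_congr rfl fun i _ => ?_
      subst hm
      by_cases h : i = m <;> simp [h]
    have h2 : (∑ i : Fin n, (if i = m ∧ ¬(i = L) then (1:ℚ) else 0)) = 0 := by
      refine Finset.sum_eq_zero fun i _ => ?_
      rw [if_neg]
      rintro ⟨rfl, hL⟩
      exact hL hm
    have h3 : (∑ i : Fin n, (if i = L ∧ ¬(m = L) then (1:ℚ) else 0)) = 0 := by
      refine Finset.sum_eq_zero fun i _ => ?_
      rw [if_neg]
      rintro ⟨-, hL⟩
      exact hL hm
    have h4 : (∑ i : Fin n, (if i = L ∧ i = m then (1:ℚ) else 0)) = 1 := by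
      have : ∀ i : Fin n, (if i = L ∧ i = m then (1:ℚ) else 0)
          = (if i = L then (1:ℚ) else 0) := by
        intro i
        by_cases h : i = L
        · rw [if_pos ⟨h, hm ▸ h⟩, if_pos h]
        · rw [if_neg (fun hc => h hc.1), if_neg h]
      rw [Finset.sum_congr rfl fun i _ => this i, sum_single_eq]
    rw [h1, h2, h3, h4, Finset.sum_sub_distrib, sum_eq_card, sum_single_eq]
    ring
  · have h1 : (∑ i : Fin n, (if ¬(i = L) ∧ ¬(i = m) then (1:ℚ) else 0))
        = ∑ i : Fin n, ((1:ℚ) - (if i = L then 1 else 0) - (if i = m then 1 else 0)) := by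
      refine Finset.sum_congr rfl fun i _ => ?_
      by_cases h : i = L
      · rw [if_neg (fun hc => hc.1 h), if_pos h, if_neg (fun hc => hm (hc.symm.trans h))]
        ring
      · by_cases h2 : i = m
        · rw [if_neg (fun hc => hc.2 h2), if_neg h, if_pos h2]
          ring
        · rw [if_pos ⟨h, h2⟩, if_neg h, if_neg h2]
          ring
    have h2 : (∑ i : Fin n, (if i = m ∧ ¬(i = L) then (1:ℚ) else 0)) = 1 := by
      have : ∀ i : Fin n, (if i = m ∧ ¬(i = L) then (1:ℚ) else 0)
          = (if i = m then (1:ℚ) else 0) := by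
        intro i
        by_cases h : i = m
        · subst h
          rw [if_pos ⟨rfl, hm⟩, if_pos rfl]
        · rw [if_neg (fun hc => h hc.1), if_neg h]
      rw [Finset.sum_congr rfl fun i _ => this i, sum_single_eq]
    have h3 : (∑ i : Fin n, (if i = L ∧ ¬(m = L) then (1:ℚ) else 0)) = 1 := by
      have : ∀ i : Fin n, (if i = L ∧ ¬(m = L) then (1:ℚ) else 0)
          = (if i = L then (1:ℚ) else 0) := by
        intro i
        by_cases h : i = L
        · rw [if_pos ⟨h, hm⟩, if_pos h]
        · rw [if_neg (fun hc => h hc.1), if_neg h]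
      rw [Finset.sum_congr rfl fun i _ => this i, sum_single_eq]
    have h4 : (∑ i : Fin n, (if i = L ∧ i = m then (1:ℚ) else 0)) = 0 := by
      refine Finset.sum_eq_zero fun i _ => ?_
      rw [if_neg]
      rintro ⟨rfl, hc⟩
      exact hm hc.symm
    rw [h1, h2, h3, h4]
    simp only [Finset.sum_sub_distrib, sum_eq_card, sum_single_eq]
    have h2n : (2:ℚ) ≤ n := by exact_mod_cast hn
    ring

lemma MX_xUR {n : ℕ} [NeZero n] (hn : 2 ≤ n) (G : Grid n) :
    G.MX G.xUR = 1 - (n:ℚ) := by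
  have hmain : Ifun (Grid.pts G.xUR - G.XX) (Grid.pts G.xUR - G.XX) = -(n:ℚ) := by
    rw [expand_main]
    have hs := summed hn G
    have hE := Esum hn G.σX
    linarith [hs, hE]
  unfold Grid.MX Jfun
  rw [hmain]
  ring

lemma A_eq_M_sub_MX {n : ℕ} (G : Grid n) (x : Equiv.Perm (Fin n)) :
    G.A x = (G.M x - G.MX x) / 2 - ((n:ℚ) - 1) / 2 := by
  unfold Grid.A Grid.M Grid.MX Jfun
  simp only [Ifun_sub_left, Ifun_sub_right, Ifun_smul_left, Ifun_smul_right, Ifun_add_left, Ifun_add_right]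
  ring


/-- For a toroidal grid diagram `G` of size `n` representing a knot,
the canonical generator `x^UR` satisfies `A(x^UR) = (1/2) · M(x^UR)`. -/
theorem alexander_eq_half_maslov_xUR {n : ℕ} [NeZero n] (hn : 2 ≤ n)
    (G : Grid n) (hK : G.RepKnot) :
    G.A G.xUR = (1 / 2 : ℚ) * G.M G.xUR := by
  rw [A_eq_M_sub_MX, MX_xUR hn G]
  ring
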